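/- Let U = [U_1, U_2] be an m-by-m real orthogonal matrix with U_1 consisting of its first d columns, let H be an (m−d)-by-d real matrix, and define Q = (U_1 + U_2 H)(I_d + H^T H)^{-1/2}. Then for every matrix J̃ = U_1 C with C a d-by-k real matrix, one has ‖(I_m − Q Q^T) J̃‖_F ≤ (1 + ‖H‖_2^2) ‖H‖_F ‖J̃‖_2. -/

import Mathlib

open Matrix

/-- Frobenius norm of a real matrix. -/
noncomputable def frob {α β : Type*} [Fintype α] [Fintype β] (A : Matrix α β ℝ) : ℝ :=
  Real.sqrt (∑ i, ∑ j, (A i j) ^ 2)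

/-- Spectral (operator 2-) norm of a real matrix. -/
noncomputable def spec {α β : Type*} [Fintype α] [Fintype β] [DecidableEq β]
    (A : Matrix α β ℝ) : ℝ :=
  ‖LinearMap.toContinuousLinearMap (Matrix.toEuclideanLin A)‖

open scoped Matrix.Norms.L2Operator

section Aux
variable {α β γ δ : Type*} [Fintype α] [Fintype β] [Fintype γ] [Fintype δ]

lemma spec_eq [DecidableEq β] (A : Matrix α β ℝ) : spec A = ‖A‖ := rfl

lemma spec_nonneg [DecidableEq β] (A : Matrix α β ℝ) : 0 ≤ spec A := by
  rw [spec_eq]; exact norm_nonneg _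

lemma frob_nonneg (A : Matrix α β ℝ) : 0 ≤ frob A := Real.sqrt_nonneg _

lemma frob_sq (A : Matrix α β ℝ) : frob A ^ 2 = ∑ i, ∑ j, (A i j) ^ 2 := by
  rw [frob, Real.sq_sqrt]; positivity

lemma euclid_norm (x : EuclideanSpace ℝ α) : ‖x‖ = Real.sqrt (∑ i, x i ^ 2) := by
  rw [EuclideanSpace.norm_eq]
  simp [Real.norm_eq_abs, sq_abs]

lemma spec_transpose [DecidableEq α] [DecidableEq β] (A : Matrix α β ℝ) : spec Aᵀ = spec A := by
  have h : Aᵀ = Aᴴ := by ext i j; simp [conjTranspose_apply]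
  rw [spec_eq, spec_eq, h, Matrix.l2_opNorm_conjTranspose]

lemma mulVec_norm_le [DecidableEq β] (A : Matrix α β ℝ) (v : β → ℝ) :
    Real.sqrt (∑ i, (A *ᵥ v) i ^ 2) ≤ spec A * Real.sqrt (∑ j, v j ^ 2) := by
  have := Matrix.l2_opNorm_mulVec A ((EuclideanSpace.equiv β ℝ).symm v)
  rw [euclid_norm, euclid_norm] at this
  simpa [spec_eq] using this

lemma mulVec_sq_le [DecidableEq β] (A : Matrix α β ℝ) (v : β → ℝ) :
    ∑ i, (A *ᵥ v) i ^ 2 ≤ spec A ^ 2 * ∑ j, v j ^ 2 := by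
  have h := mulVec_norm_le A v
  have h1 : (0:ℝ) ≤ Real.sqrt (∑ i, (A *ᵥ v) i ^ 2) := Real.sqrt_nonneg _
  nlinarith [Real.sq_sqrt (by positivity : (0:ℝ) ≤ ∑ i, (A *ᵥ v) i ^ 2),
    Real.sq_sqrt (by positivity : (0:ℝ) ≤ ∑ j, v j ^ 2), Real.sqrt_nonneg (∑ j, v j ^ 2)]

lemma spec_le_bound [DecidableEq β] (A : Matrix α β ℝ) (c : ℝ) (hc : 0 ≤ c)
    (h : ∀ v : β → ℝ, Real.sqrt (∑ i, (A *ᵥ v) i ^ 2) ≤ c * Real.sqrt (∑ j, v j ^ 2)) :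
    spec A ≤ c := by
  rw [spec_eq]
  refine Matrix.l2_opNorm_def A ▸ ContinuousLinearMap.opNorm_le_bound _ hc fun x => ?_
  have hx := h ((EuclideanSpace.equiv β ℝ) x)
  rw [euclid_norm x,
    euclid_norm ((LinearEquiv.trans Matrix.toEuclideanLin LinearMap.toContinuousLinearMap) A x)]
  convert hx using 3 <;> rfl

lemma frob_transpose (A : Matrix α β ℝ) : frob Aᵀ = frob A := by
  rw [frob, frob, Finset.sum_comm]
  rfl

lemma frob_sq_le_of_mul [DecidableEq β] (A : Matrix α β ℝ) (B : Matrix β γ ℝ) :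
    frob (A * B) ^ 2 ≤ spec A ^ 2 * frob B ^ 2 := by
  rw [frob_sq, frob_sq, Finset.sum_comm]
  rw [show (∑ i, ∑ j, (B i j) ^ 2) = ∑ j, ∑ i, (B i j) ^ 2 from Finset.sum_comm, Finset.mul_sum]
  refine Finset.sum_le_sum fun j _ => ?_
  have := mulVec_sq_le A (fun l => B l j)
  simpa [Matrix.mul_apply, Matrix.mulVec, dotProduct] using this

lemma sq_le_imp {a b : ℝ} (ha : 0 ≤ a) (hb : 0 ≤ b) (h : a ^ 2 ≤ b ^ 2) : a ≤ b := by
  nlinarith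

lemma frob_mul_le_spec_frob [DecidableEq β] (A : Matrix α β ℝ) (B : Matrix β γ ℝ) :
    frob (A * B) ≤ spec A * frob B :=
  sq_le_imp (frob_nonneg _) (mul_nonneg (spec_nonneg _) (frob_nonneg _))
    (by rw [mul_pow]; exact frob_sq_le_of_mul A B)

lemma frob_mul_le_frob_spec [DecidableEq α] [DecidableEq β] [DecidableEq γ]
    (A : Matrix α β ℝ) (B : Matrix β γ ℝ) :
    frob (A * B) ≤ frob A * spec B := by
  have := frob_mul_le_spec_frob Bᵀ Aᵀ
  rw [← Matrix.transpose_mul, frob_transpose, frob_transpose, spec_transpose] at this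
  linarith

lemma orth_mulVec [DecidableEq β] (U : Matrix α β ℝ) (hU : Uᵀ * U = 1) (w : β → ℝ) :
    ∑ i, (U *ᵥ w) i ^ 2 = ∑ j, w j ^ 2 := by
  have h1 : (U *ᵥ w) ⬝ᵥ (U *ᵥ w) = w ⬝ᵥ w := by
    rw [Matrix.dotProduct_mulVec, ← Matrix.mulVec_transpose, Matrix.mulVec_mulVec, hU,
      Matrix.one_mulVec]
  simpa [dotProduct, pow_two] using h1

lemma spec_mul_le [DecidableEq β] [DecidableEq γ] (A : Matrix α β ℝ) (B : Matrix β γ ℝ) :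
    spec (A * B) ≤ spec A * spec B := by
  refine spec_le_bound _ _ (mul_nonneg (spec_nonneg _) (spec_nonneg _)) fun v => ?_
  rw [← Matrix.mulVec_mulVec]
  calc Real.sqrt (∑ i, (A *ᵥ (B *ᵥ v)) i ^ 2) ≤ spec A * Real.sqrt (∑ j, (B *ᵥ v) j ^ 2) :=
        mulVec_norm_le A _
    _ ≤ spec A * (spec B * Real.sqrt (∑ j, v j ^ 2)) :=
        mul_le_mul_of_nonneg_left (mulVec_norm_le B v) (spec_nonneg A)
    _ = spec A * spec B * Real.sqrt (∑ j, v j ^ 2) := by ring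

lemma spec_le_of_orth_mul [DecidableEq β] [DecidableEq γ] (U : Matrix α β ℝ) (hU : Uᵀ * U = 1)
    (C : Matrix β γ ℝ) : spec C ≤ spec (U * C) := by
  refine spec_le_bound _ _ (spec_nonneg _) fun v => ?_
  have h := mulVec_norm_le (U * C) v
  rw [← Matrix.mulVec_mulVec, orth_mulVec U hU] at h
  exact h

lemma dot_psd (Hm : Matrix α β ℝ) (y : β → ℝ) :
    ((Hmᵀ * Hm) *ᵥ y) ⬝ᵥ y = (Hm *ᵥ y) ⬝ᵥ (Hm *ᵥ y) := by
  rw [← Matrix.mulVec_mulVec, Matrix.mulVec_transpose, ← Matrix.dotProduct_mulVec]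

lemma spec_inv_le_one [DecidableEq β] (Hm : Matrix α β ℝ) (G : Matrix β β ℝ)
    (hG : (1 + Hmᵀ * Hm) * G = 1) : spec G ≤ 1 := by
  refine spec_le_bound _ _ zero_le_one fun v => ?_
  set y := G *ᵥ v with hy
  have hv : y + (Hmᵀ * Hm) *ᵥ y = v := by
    calc y + (Hmᵀ * Hm) *ᵥ y = (1 + Hmᵀ * Hm) *ᵥ y := by
          rw [Matrix.add_mulVec, Matrix.one_mulVec]
      _ = ((1 + Hmᵀ * Hm) * G) *ᵥ v := by rw [hy, Matrix.mulVec_mulVec]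
      _ = v := by rw [hG, Matrix.one_mulVec]
  have hdot : v ⬝ᵥ y = y ⬝ᵥ y + (Hm *ᵥ y) ⬝ᵥ (Hm *ᵥ y) := by
    rw [← hv, add_dotProduct, dot_psd]
  have hnn : (0:ℝ) ≤ (Hm *ᵥ y) ⬝ᵥ (Hm *ᵥ y) := by
    simp only [dotProduct, ← pow_two]; positivity
  have hyy : y ⬝ᵥ y = ∑ i, y i ^ 2 := by simp [dotProduct, pow_two]
  have hcs : (∑ i, v i * y i) ^ 2 ≤ (∑ i, v i ^ 2) * ∑ i, y i ^ 2 :=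
    Finset.sum_mul_sq_le_sq_mul_sq _ _ _
  have hvy : v ⬝ᵥ y = ∑ i, v i * y i := rfl
  have hsy : (0:ℝ) ≤ ∑ i, y i ^ 2 := by positivity
  have hsv : (0:ℝ) ≤ ∑ i, v i ^ 2 := by positivity
  have key : ∑ i, y i ^ 2 ≤ ∑ i, v i ^ 2 := by nlinarith
  rw [one_mul]
  exact Real.sqrt_le_sqrt key

lemma frob_sq_trace (A : Matrix α β ℝ) : frob A ^ 2 = (Aᵀ * A).trace := by
  rw [frob_sq, Matrix.trace]
  simp only [Matrix.diag, Matrix.mul_apply, Matrix.transpose_apply, ← pow_two]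
  exact Finset.sum_comm

lemma frob_orth_decomp [DecidableEq β] [DecidableEq γ] (U1 : Matrix α β ℝ) (U2 : Matrix α γ ℝ)
    (hU1 : U1ᵀ * U1 = 1) (hU2 : U2ᵀ * U2 = 1) (hU12 : U1ᵀ * U2 = 0)
    (X : Matrix β δ ℝ) (Y : Matrix γ δ ℝ) :
    frob (U1 * X - U2 * Y) ^ 2 = frob X ^ 2 + frob Y ^ 2 := by
  have h21 : U2ᵀ * U1 = 0 := by
    have := congrArg Matrix.transpose hU12
    simpa [Matrix.transpose_mul] using this
  have hM : (U1 * X - U2 * Y)ᵀ * (U1 * X - U2 * Y) = Xᵀ * X + Yᵀ * Y := by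
    have e1 : Xᵀ * U1ᵀ * (U1 * X) = Xᵀ * X := by
      rw [Matrix.mul_assoc Xᵀ, ← Matrix.mul_assoc U1ᵀ, hU1, Matrix.one_mul]
    have e2 : Xᵀ * U1ᵀ * (U2 * Y) = 0 := by
      rw [Matrix.mul_assoc Xᵀ, ← Matrix.mul_assoc U1ᵀ, hU12, Matrix.zero_mul, Matrix.mul_zero]
    have e3 : Yᵀ * U2ᵀ * (U1 * X) = 0 := by
      rw [Matrix.mul_assoc Yᵀ, ← Matrix.mul_assoc U2ᵀ, h21, Matrix.zero_mul, Matrix.mul_zero]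
    have e4 : Yᵀ * U2ᵀ * (U2 * Y) = Yᵀ * Y := by
      rw [Matrix.mul_assoc Yᵀ, ← Matrix.mul_assoc U2ᵀ, hU2, Matrix.one_mul]
    rw [Matrix.transpose_sub, Matrix.transpose_mul, Matrix.transpose_mul,
      Matrix.sub_mul, Matrix.mul_sub, Matrix.mul_sub, e1, e2, e3, e4]
    abel
  rw [frob_sq_trace, hM, Matrix.trace_add, ← frob_sq_trace, ← frob_sq_trace]

end Aux

set_option maxHeartbeats 1000000 in
/-- Let `[U₁, U₂]` be orthogonal, `Sq` the unique symmetric positive definite square root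
of `I + Hᵀ H` (so that `Sq⁻¹ = (I + Hᵀ H)^{-1/2}`), and `Q = (U₁ + U₂ H) Sq⁻¹`.  Then for
every `J̃ = U₁ C`, `‖(I − Q Qᵀ) J̃‖_F ≤ (1 + ‖H‖₂²) ‖H‖_F ‖J̃‖₂`. -/
theorem stmt_13 (m d k : ℕ) (hdm : d ≤ m)
    (U1 : Matrix (Fin m) (Fin d) ℝ) (U2 : Matrix (Fin m) (Fin (m - d)) ℝ)
    (hU1 : U1ᵀ * U1 = 1) (hU2 : U2ᵀ * U2 = 1) (hU12 : U1ᵀ * U2 = 0)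
    (H : Matrix (Fin (m - d)) (Fin d) ℝ)
    (Sq : Matrix (Fin d) (Fin d) ℝ) (hSqpd : Sq.PosDef)
    (hSq : Sq * Sq = 1 + Hᵀ * H)
    (Q : Matrix (Fin m) (Fin d) ℝ) (hQ : Q = (U1 + U2 * H) * Sq⁻¹)
    (C : Matrix (Fin d) (Fin k) ℝ) :
    frob (((1 : Matrix (Fin m) (Fin m) ℝ) - Q * Qᵀ) * (U1 * C)) ≤
      (1 + spec H ^ 2) * frob H * spec (U1 * C) := by
  have hdet : IsUnit Sq.det := (Matrix.isUnit_iff_isUnit_det Sq).mp hSqpd.isUnit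
  have hSs : Sq * Sq⁻¹ = 1 := Matrix.mul_nonsing_inv _ hdet
  have hSs' : Sq⁻¹ * Sq = 1 := Matrix.nonsing_inv_mul _ hdet
  set G : Matrix (Fin d) (Fin d) ℝ := Sq⁻¹ * Sq⁻¹ with hGdef
  have hGl : (1 + Hᵀ * H) * G = 1 := by
    rw [← hSq, hGdef, Matrix.mul_assoc, ← Matrix.mul_assoc Sq Sq⁻¹ Sq⁻¹, hSs, Matrix.one_mul, hSs]
  have hSymm : Sqᵀ = Sq := by
    ext i j
    have := congrFun (congrFun hSqpd.1 i) j
    simpa [Matrix.conjTranspose_apply] using this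
  have hSinvT : (Sq⁻¹)ᵀ = Sq⁻¹ := by rw [Matrix.transpose_nonsing_inv, hSymm]
  have h21 : U2ᵀ * U1 = 0 := by
    have := congrArg Matrix.transpose hU12
    simpa [Matrix.transpose_mul] using this
  set Y : Matrix (Fin (m - d)) (Fin k) ℝ := H * (G * C) with hYdef
  set X : Matrix (Fin d) (Fin k) ℝ := Hᵀ * Y with hXdef
  -- the key algebraic identity
  have hQtU1C : Qᵀ * (U1 * C) = Sq⁻¹ * C := by
    rw [hQ, Matrix.transpose_mul, hSinvT, Matrix.transpose_add, Matrix.transpose_mul]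
    rw [Matrix.mul_assoc, Matrix.add_mul]
    have e1 : U1ᵀ * (U1 * C) = C := by rw [← Matrix.mul_assoc, hU1, Matrix.one_mul]
    have e2 : Hᵀ * U2ᵀ * (U1 * C) = 0 := by
      rw [Matrix.mul_assoc Hᵀ, ← Matrix.mul_assoc U2ᵀ, h21, Matrix.zero_mul, Matrix.mul_zero]
    rw [e1, e2, add_zero]
  have hM : ((1 : Matrix (Fin m) (Fin m) ℝ) - Q * Qᵀ) * (U1 * C) = U1 * X - U2 * Y := by
    have h1G : C - G * C = X := by
      have hsub : (1 : Matrix (Fin d) (Fin d) ℝ) - G = Hᵀ * H * G := by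
        have := hGl
        rw [Matrix.add_mul, Matrix.one_mul] at this
        rw [← this]; abel
      calc C - G * C = ((1 : Matrix (Fin d) (Fin d) ℝ) - G) * C := by
            rw [Matrix.sub_mul, Matrix.one_mul]
        _ = (Hᵀ * H * G) * C := by rw [hsub]
        _ = X := by rw [hXdef, hYdef, Matrix.mul_assoc, Matrix.mul_assoc]
    calc ((1 : Matrix (Fin m) (Fin m) ℝ) - Q * Qᵀ) * (U1 * C)
        = U1 * C - Q * (Qᵀ * (U1 * C)) := by
          rw [Matrix.sub_mul, Matrix.one_mul, Matrix.mul_assoc]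
      _ = U1 * C - (U1 + U2 * H) * (G * C) := by
          rw [hQtU1C, hQ, Matrix.mul_assoc, hGdef, Matrix.mul_assoc]
      _ = U1 * C - (U1 * (G * C) + U2 * (H * (G * C))) := by
          rw [Matrix.add_mul, Matrix.mul_assoc, Matrix.mul_assoc U2]
      _ = U1 * (C - G * C) - U2 * Y := by
          rw [Matrix.mul_sub, hYdef]; abel
      _ = U1 * X - U2 * Y := by rw [h1G]
  rw [hM]
  -- norms
  have hdecomp : frob (U1 * X - U2 * Y) ^ 2 = frob X ^ 2 + frob Y ^ 2 :=
    frob_orth_decomp U1 U2 hU1 hU2 hU12 X Y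
  have hGle : spec G ≤ 1 := spec_inv_le_one H G hGl
  have hspecGC : spec (G * C) ≤ spec (U1 * C) := by
    calc spec (G * C) ≤ spec G * spec C := spec_mul_le G C
      _ ≤ 1 * spec C := mul_le_mul_of_nonneg_right hGle (spec_nonneg C)
      _ = spec C := one_mul _
      _ ≤ spec (U1 * C) := spec_le_of_orth_mul U1 hU1 C
  have hY : frob Y ≤ frob H * spec (U1 * C) := by
    calc frob Y ≤ frob H * spec (G * C) := frob_mul_le_frob_spec H (G * C)
      _ ≤ frob H * spec (U1 * C) :=
          mul_le_mul_of_nonneg_left hspecGC (frob_nonneg H)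
  have hX : frob X ≤ spec H * frob Y := by
    have := frob_mul_le_spec_frob Hᵀ Y
    rwa [spec_transpose] at this
  have hYnn := frob_nonneg Y
  have hXnn := frob_nonneg X
  have hHnn := spec_nonneg H
  have hfHnn := frob_nonneg H
  have hUCnn := spec_nonneg (U1 * C)
  set s := spec H with hs
  set b := frob H * spec (U1 * C) with hb
  have hbnn : 0 ≤ b := mul_nonneg hfHnn hUCnn
  rw [mul_assoc, ← hb]
  have h1 : frob X ^ 2 ≤ s ^ 2 * frob Y ^ 2 := by nlinarith
  have h2 : frob Y ^ 2 ≤ b ^ 2 := by nlinarith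
  have h3 : s ^ 2 * frob Y ^ 2 ≤ s ^ 2 * b ^ 2 := mul_le_mul_of_nonneg_left h2 (sq_nonneg s)
  refine sq_le_imp (frob_nonneg _) (mul_nonneg (by nlinarith [sq_nonneg s]) hbnn) ?_
  rw [hdecomp]
  nlinarith [mul_nonneg (sq_nonneg s) (sq_nonneg b),
    mul_nonneg (mul_nonneg (sq_nonneg s) (sq_nonneg s)) (sq_nonneg b)]
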